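/- Let v(t) = ∫_{−2w}^{2w} e^{itλ} ρ_sc(λ) dλ. Then the convolution (v∗v)(t) := ∫₀ᵗ v(t−s)v(s) ds equals −(i/w²) ∫_{−2w}^{2w} e^{iμt} μ ρ_sc(μ) dμ. -/

import Mathlib

/-!
Both sides are expanded in powers of `t`. The moments `m_n = ∫ μ^n ρ_sc(μ) dμ` are `C_k w^{2k}`
for `n = 2k` (`C_k` the Catalan numbers) and vanish for odd `n`; they follow from the recursion
`(n+4) m_{n+2} = 4(n+1) w² m_n`, obtained by differentiating `μ^{n+1} (4w² - μ²)^{3/2}`. Hence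
`v(t) = ∑ c_n (iwt)^n / n!` with `c` the Catalan numbers interleaved with zeros. Since
`∫₀ᵗ (t-s)^p/p! · s^q/q! ds = t^{p+q+1}/(p+q+1)!`, the Volterra convolution of two exponential
generating series is the Cauchy product of their coefficients shifted by one degree, and Catalan's
recurrence `∑_{p+q=N} c_p c_q = c_{N+2}` matches the coefficients of `v∗v` with those of
`-(i/w²) ∫ e^{iμt} μ ρ_sc(μ) dμ = -(i/w²) ∑ (it)^n/n! · m_{n+1}`.
-/

open MeasureTheory intervalIntegral

/-- The semicircle density with parameter `w`. -/
noncomputable def rhoSC (w x : ℝ) : ℝ :=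
  (2 * Real.pi * w ^ 2)⁻¹ * Real.sqrt (max 0 (4 * w ^ 2 - x ^ 2))

/-- `v(t) = ∫ e^{itλ} ρ_sc(λ) dλ`, the Fourier transform of the semicircle density. -/
noncomputable def vSC (w t : ℝ) : ℂ :=
  ∫ x in (-(2 * w))..(2 * w), Complex.exp (Complex.I * t * x) * (rhoSC w x : ℂ)

open Finset Nat Real
open Complex (I)

theorem integral_sub_pow_div_factorial_mul_pow_div_factorial (t : ℝ) (p q : ℕ) :
    ∫ s in (0 : ℝ)..t, (t - s) ^ p / p ! * (s ^ q / q !) = t ^ (p + q + 1) / (p + q + 1)! := by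
  induction q generalizing p with
  | zero =>
    simp only [pow_zero, factorial_zero, cast_one, div_one, mul_one, add_zero]
    rw [intervalIntegral.integral_div, intervalIntegral.integral_comp_sub_left (fun s => s ^ p),
      sub_self, sub_zero, integral_pow, factorial_succ]
    push_cast
    field_simp
    ring
  | succ q ih =>
    have hasDerivAt_pow_div (n : ℕ) (x : ℝ) :
        HasDerivAt (fun x : ℝ => x ^ (n + 1) / (n + 1)!) (x ^ n / n !) x := by
      refine ((hasDerivAt_pow (n + 1) x).div_const ((n + 1)! : ℝ)).congr_deriv ?_
      rw [Nat.add_sub_cancel, factorial_succ]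
      push_cast
      field_simp
    have hu : ∀ s ∈ Set.uIcc 0 t,
        HasDerivAt (fun s : ℝ => s ^ (q + 1) / (q + 1)!) (s ^ q / q !) s :=
      fun s _ => hasDerivAt_pow_div q s
    have hv : ∀ s ∈ Set.uIcc 0 t,
        HasDerivAt (fun s => -((t - s) ^ (p + 1) / (p + 1)!)) ((t - s) ^ p / p !) s := by
      intro s _
      refine ((hasDerivAt_pow_div p (t - s)).comp s ((hasDerivAt_id s).const_sub t)).neg
        |>.congr_deriv ?_
      ring
    have hparts := integral_mul_deriv_eq_deriv_mul hu hv
      ((by fun_prop : Continuous _).intervalIntegrable _ _)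
      ((by fun_prop : Continuous _).intervalIntegrable _ _)
    simp only [sub_self, zero_pow (succ_ne_zero _), zero_div, neg_zero, mul_zero, zero_mul,
      sub_zero, mul_neg, intervalIntegral.integral_neg, sub_neg_eq_add, zero_add] at hparts
    rw [show p + (q + 1) + 1 = p + 1 + q + 1 by ring, ← ih (p + 1)]
    simpa only [mul_comm] using hparts

theorem HasSum.sum_antidiagonal {A α : Type*} [AddCommMonoid A] [HasAntidiagonal A]
    [AddCommMonoid α] [TopologicalSpace α] [ContinuousAdd α] [RegularSpace α]
    {f : A × A → α} {a : α} (h : HasSum f a) :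
    HasSum (fun n => ∑ p ∈ antidiagonal n, f p) a := by
  refine (HasAntidiagonal.sigmaAntidiagonalEquivProd.hasSum_iff.mpr h).sigma fun n => ?_
  rw [← Finset.sum_coe_sort]
  exact hasSum_fintype _

theorem hasSum_intervalIntegral_mul_prod_of_hasSum {a b : ℕ → ℂ} {f g : ℝ → ℂ} {t : ℝ}
    (ha : Summable fun n => ‖a n‖ * |t| ^ n / n !)
    (hb : Summable fun n => ‖b n‖ * |t| ^ n / n !)
    (hf : ∀ x : ℝ, HasSum (fun n => a n * (x : ℂ) ^ n / n !) (f x))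
    (hg : ∀ x : ℝ, HasSum (fun n => b n * (x : ℂ) ^ n / n !) (g x)) :
    HasSum (fun p : ℕ × ℕ => ∫ s in (0 : ℝ)..t,
        a p.1 * ((t - s : ℝ) : ℂ) ^ p.1 / p.1 ! * (b p.2 * (s : ℂ) ^ p.2 / p.2 !))
      (∫ s in (0 : ℝ)..t, f (t - s) * g s) := by
  have norm_le {c : ℕ → ℂ} {x : ℝ} (hx : |x| ≤ |t|) (n : ℕ) :
      ‖c n * (x : ℂ) ^ n / (n ! : ℂ)‖ ≤ ‖c n‖ * |t| ^ n / n ! := by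
    simp only [norm_div, norm_mul, norm_pow, Complex.norm_real, Complex.norm_natCast,
      Real.norm_eq_abs]
    gcongr
  have abs_le_of_mem {s : ℝ} (hs : s ∈ Set.uIoc 0 t) : |t - s| ≤ |t| ∧ |s| ≤ |t| := by
    have hs' := Set.uIoc_subset_uIcc hs
    simpa using And.intro (Set.abs_sub_right_of_mem_uIcc hs') (Set.abs_sub_left_of_mem_uIcc hs')
  refine intervalIntegral.hasSum_integral_of_dominated_convergence
    (fun p _ => ‖a p.1‖ * |t| ^ p.1 / p.1 ! * (‖b p.2‖ * |t| ^ p.2 / p.2 !))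
    (fun p => (by fun_prop : Continuous _).aestronglyMeasurable) (fun p => ?_)
    (ae_of_all _ fun _ _ => ha.mul_of_nonneg hb (fun _ => by positivity) fun _ => by positivity)
    intervalIntegrable_const ?_
  · refine ae_of_all _ fun s hs => ?_
    rw [norm_mul]
    exact mul_le_mul (norm_le (abs_le_of_mem hs).1 _) (norm_le (abs_le_of_mem hs).2 _)
      (norm_nonneg _) (by positivity)
  · refine ae_of_all _ fun s hs => ?_
    have hsum_a : Summable fun n => ‖a n * ((t - s : ℝ) : ℂ) ^ n / (n ! : ℂ)‖ :=
      ha.of_nonneg_of_le (fun _ => norm_nonneg _) (norm_le (abs_le_of_mem hs).1)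
    have hsum_b : Summable fun n => ‖b n * (s : ℂ) ^ n / (n ! : ℂ)‖ :=
      hb.of_nonneg_of_le (fun _ => norm_nonneg _) (norm_le (abs_le_of_mem hs).2)
    have hprod := summable_mul_of_summable_norm (R := ℂ) hsum_a hsum_b
    simpa only using (hf (t - s)).mul (hg s) hprod

theorem hasSum_intervalIntegral_mul_of_hasSum_pow_div_factorial {a b : ℕ → ℂ} {f g : ℝ → ℂ}
    {t : ℝ} (ha : Summable fun n => ‖a n‖ * |t| ^ n / n !)
    (hb : Summable fun n => ‖b n‖ * |t| ^ n / n !)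
    (hf : ∀ x : ℝ, HasSum (fun n => a n * (x : ℂ) ^ n / n !) (f x))
    (hg : ∀ x : ℝ, HasSum (fun n => b n * (x : ℂ) ^ n / n !) (g x)) :
    HasSum (fun N => (∑ p ∈ antidiagonal N, a p.1 * b p.2) * (t : ℂ) ^ (N + 1) / (N + 1)!)
      (∫ s in (0 : ℝ)..t, f (t - s) * g s) := by
  refine (hasSum_intervalIntegral_mul_prod_of_hasSum ha hb hf hg).sum_antidiagonal.congr_fun
    fun N => ?_
  rw [Finset.sum_mul, Finset.sum_div]
  refine Finset.sum_congr rfl fun p hp => ?_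
  rw [HasAntidiagonal.mem_antidiagonal] at hp
  have hterm (s : ℝ) : a p.1 * ((t - s : ℝ) : ℂ) ^ p.1 / p.1 ! * (b p.2 * (s : ℂ) ^ p.2 / p.2 !)
      = a p.1 * b p.2 * (((t - s) ^ p.1 / p.1 ! * (s ^ p.2 / p.2 !) : ℝ) : ℂ) := by
    push_cast
    ring
  simp_rw [hterm, intervalIntegral.integral_const_mul, intervalIntegral.integral_ofReal,
    integral_sub_pow_div_factorial_mul_pow_div_factorial, hp]
  push_cast
  ring

theorem hasSum_intervalIntegral_cexp_mul {g : ℝ → ℂ} {a b : ℝ}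
    (hg : IntervalIntegrable g volume a b) (r : ℝ) :
    HasSum (fun n => (I * r) ^ n / n ! * ∫ x in a..b, (x : ℂ) ^ n * g x)
      (∫ x in a..b, Complex.exp (I * r * x) * g x) := by
  have abs_le_max {x : ℝ} (hx : x ∈ Set.uIoc a b) : |x| ≤ max |a| |b| := by
    have hx' := Set.uIoc_subset_uIcc hx
    rcases le_total a b with h | h
    · rw [Set.uIcc_of_le h] at hx'
      exact abs_le_max_abs_abs hx'.1 hx'.2
    · rw [Set.uIcc_of_ge h] at hx'
      exact max_comm |b| |a| ▸ abs_le_max_abs_abs hx'.1 hx'.2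
  have hsum : HasSum (fun n => ∫ x in a..b, (I * r) ^ n / n ! * ((x : ℂ) ^ n * g x))
      (∫ x in a..b, Complex.exp (I * r * x) * g x) := by
    refine intervalIntegral.hasSum_integral_of_dominated_convergence
      (fun n x => (|r| * max |a| |b|) ^ n / n ! * ‖g x‖) (fun n => ?_) (fun n => ?_)
      (ae_of_all _ fun x _ => (Real.summable_pow_div_factorial _).mul_right _) ?_ ?_
    · exact (by fun_prop : Continuous fun x : ℝ => (I * r) ^ n / n ! * (x : ℂ) ^ n)
        |>.aestronglyMeasurable.mul hg.def'.aestronglyMeasurable |>.congr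
        (ae_of_all _ fun x => (mul_assoc _ _ _ : _))
    · refine ae_of_all _ fun x hx => ?_
      simp only [norm_mul, norm_div, norm_pow, Complex.norm_real, Complex.norm_I,
        Complex.norm_natCast, one_pow, one_mul, mul_pow, Real.norm_eq_abs]
      have hx := pow_le_pow_left₀ (abs_nonneg x) (abs_le_max hx) n
      refine (mul_le_mul_of_nonneg_left (mul_le_mul_of_nonneg_right hx (norm_nonneg (g x)))
        (by positivity : 0 ≤ |r| ^ n / n !)).trans_eq (by ring)
    · simp_rw [tsum_mul_right]
      exact hg.norm.const_mul _
    · refine ae_of_all _ fun x _ => ?_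
      rw [Complex.exp_eq_exp_ℂ]
      refine ((NormedSpace.expSeries_div_hasSum_exp (I * r * x)).mul_right (g x)).congr_fun
        fun n => ?_
      ring
  simpa only [intervalIntegral.integral_const_mul] using hsum

/-- The moments of the semicircle law of radius `2`. -/
def aeratedCatalan (n : ℕ) : ℕ := if Even n then catalan (n / 2) else 0

theorem aeratedCatalan_two_mul (k : ℕ) : aeratedCatalan (2 * k) = catalan k := by
  simp [aeratedCatalan]

theorem aeratedCatalan_of_not_even {n : ℕ} (hn : ¬Even n) : aeratedCatalan n = 0 := by
  simp [aeratedCatalan, hn]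

theorem even_of_aeratedCatalan_ne_zero {n : ℕ} (hn : aeratedCatalan n ≠ 0) : Even n :=
  not_not.mp (mt aeratedCatalan_of_not_even hn)

theorem add_two_mul_catalan_succ (k : ℕ) :
    (k + 2) * catalan (k + 1) = 2 * (2 * k + 1) * catalan k := by
  refine Nat.eq_of_mul_eq_mul_left k.succ_pos ?_
  calc (k + 1) * ((k + 2) * catalan (k + 1)) = (k + 1) * centralBinom (k + 1) := by
        rw [← succ_mul_catalan_eq_centralBinom]
    _ = 2 * (2 * k + 1) * ((k + 1) * catalan k) := by
        rw [succ_mul_centralBinom_succ, succ_mul_catalan_eq_centralBinom]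
    _ = (k + 1) * (2 * (2 * k + 1) * catalan k) := by ring

theorem add_four_mul_aeratedCatalan_add_two (n : ℕ) :
    (n + 4) * aeratedCatalan (n + 2) = 4 * (n + 1) * aeratedCatalan n := by
  rcases Nat.even_or_odd' n with ⟨k, rfl | rfl⟩
  · rw [show 2 * k + 2 = 2 * (k + 1) by ring, aeratedCatalan_two_mul, aeratedCatalan_two_mul]
    linear_combination 2 * add_two_mul_catalan_succ k
  · rw [aeratedCatalan_of_not_even (by simp [parity_simps]),
      aeratedCatalan_of_not_even (by simp [parity_simps]), mul_zero, mul_zero]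

theorem aeratedCatalan_le_two_pow (n : ℕ) : aeratedCatalan n ≤ 2 ^ n := by
  rcases Nat.even_or_odd' n with ⟨k, rfl | rfl⟩
  · rw [aeratedCatalan_two_mul, pow_mul]
    calc catalan k ≤ (k + 1) * catalan k := Nat.le_mul_of_pos_left _ k.succ_pos
      _ = centralBinom k := succ_mul_catalan_eq_centralBinom k
      _ ≤ (2 ^ 2) ^ k := centralBinom_le_four_pow k
  · rw [aeratedCatalan_of_not_even (by simp [parity_simps])]
    exact Nat.zero_le _

theorem sum_antidiagonal_aeratedCatalan_mul (n : ℕ) :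
    ∑ p ∈ antidiagonal n, aeratedCatalan p.1 * aeratedCatalan p.2 = aeratedCatalan (n + 2) := by
  rcases Nat.even_or_odd' n with ⟨m, rfl | rfl⟩
  · rw [show 2 * m + 2 = 2 * (m + 1) by ring, aeratedCatalan_two_mul, catalan_succ']
    symm
    refine sum_bij_ne_zero (fun p _ _ => (2 * p.1, 2 * p.2)) (fun p hp _ => ?_)
      (fun p _ _ q _ _ h => ?_) (fun q hq hq0 => ?_) (fun p _ _ => ?_)
    · simp only [HasAntidiagonal.mem_antidiagonal] at hp ⊢
      omega
    · simp only [Prod.mk.injEq] at h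
      ext <;> omega
    · obtain ⟨i, hi⟩ := even_of_aeratedCatalan_ne_zero (left_ne_zero_of_mul hq0)
      obtain ⟨j, hj⟩ := even_of_aeratedCatalan_ne_zero (right_ne_zero_of_mul hq0)
      simp only [HasAntidiagonal.mem_antidiagonal] at hq
      refine ⟨(i, j), by simp only [HasAntidiagonal.mem_antidiagonal]; omega, ?_, ?_⟩
      · simpa [hi, hj, ← two_mul, aeratedCatalan_two_mul] using hq0
      · ext <;> simp <;> omega
    · simp [aeratedCatalan_two_mul]
  · rw [aeratedCatalan_of_not_even (by simp [parity_simps])]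
    refine sum_eq_zero fun p hp => ?_
    rw [HasAntidiagonal.mem_antidiagonal] at hp
    rcases Nat.even_or_odd p.1 with ⟨i, hi⟩ | h
    · rw [aeratedCatalan_of_not_even (n := p.2) (by rintro ⟨j, hj⟩; omega), mul_zero]
    · rw [aeratedCatalan_of_not_even (Nat.not_even_iff_odd.mpr h), zero_mul]

theorem sum_antidiagonal_pow_mul_aeratedCatalan {R : Type*} [CommSemiring R] (z : R) (n : ℕ) :
    ∑ p ∈ antidiagonal n, z ^ p.1 * (aeratedCatalan p.1 : R) * (z ^ p.2 * aeratedCatalan p.2)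
      = z ^ n * aeratedCatalan (n + 2) := by
  rw [← sum_antidiagonal_aeratedCatalan_mul, Nat.cast_sum, mul_sum]
  refine sum_congr rfl fun p hp => ?_
  rw [HasAntidiagonal.mem_antidiagonal] at hp
  rw [← hp]
  push_cast
  ring

theorem hasDerivAt_sqrt_sq_sub_sq_pow_three {c x : ℝ} (hx : x ^ 2 < c ^ 2) :
    HasDerivAt (fun x => √(c ^ 2 - x ^ 2) ^ 3) (-3 * x * √(c ^ 2 - x ^ 2)) x := by
  have hpos : 0 < c ^ 2 - x ^ 2 := sub_pos.mpr hx
  have hsqrt := (((hasDerivAt_pow 2 x).const_sub (c ^ 2)).sqrt hpos.ne').pow 3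
  refine hsqrt.congr_deriv ?_
  have := (sqrt_pos.mpr hpos).ne'
  field_simp
  rw [sq_sqrt hpos.le]
  push_cast
  ring

theorem integral_eq_zero_of_hasDerivAt_of_vanish_endpoints {c : ℝ} (hc : 0 ≤ c) {F f : ℝ → ℝ}
    (hF : Continuous F) (hFc : F c = 0) (hFc' : F (-c) = 0)
    (hderiv : ∀ x, x ^ 2 < c ^ 2 → HasDerivAt F (f x) x) (hf : Continuous f) :
    ∫ x in -c..c, f x = 0 := by
  rw [integral_eq_sub_of_hasDerivAt_of_le (by linarith) hF.continuousOn
    (fun x hx => hderiv x (sq_lt_sq' hx.1 hx.2)) (hf.intervalIntegrable _ _), hFc, hFc', sub_zero]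

theorem integral_sqrt_sq_sub_sq {c : ℝ} (hc : 0 < c) :
    ∫ x in -c..c, √(c ^ 2 - x ^ 2) = π / 2 * c ^ 2 := by
  have h := intervalIntegral.integral_comp_mul_left (fun x => √(c ^ 2 - x ^ 2)) hc.ne'
    (a := -1) (b := 1)
  have hscale (x : ℝ) : √(c ^ 2 - (c * x) ^ 2) = c * √(1 - x ^ 2) := by
    rw [show c ^ 2 - (c * x) ^ 2 = c ^ 2 * (1 - x ^ 2) by ring, sqrt_mul (sq_nonneg c),
      sqrt_sq hc.le]
  simp only [hscale, intervalIntegral.integral_const_mul, integral_sqrt_one_sub_sq, mul_neg,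
    mul_one, smul_eq_mul] at h
  field_simp at h
  linarith

theorem integral_mul_sqrt_sq_sub_sq {c : ℝ} (hc : 0 ≤ c) :
    ∫ x in -c..c, x * √(c ^ 2 - x ^ 2) = 0 := by
  have h := integral_eq_zero_of_hasDerivAt_of_vanish_endpoints hc (by fun_prop) (by simp)
    (by simp) (fun x hx => hasDerivAt_sqrt_sq_sub_sq_pow_three hx) (by fun_prop)
  simp only [mul_assoc, intervalIntegral.integral_const_mul] at h
  linarith

theorem add_four_mul_integral_pow_mul_sqrt_sq_sub_sq {c : ℝ} (hc : 0 ≤ c) (n : ℕ) :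
    (n + 4) * ∫ x in -c..c, x ^ (n + 2) * √(c ^ 2 - x ^ 2)
      = (n + 1) * c ^ 2 * ∫ x in -c..c, x ^ n * √(c ^ 2 - x ^ 2) := by
  have hderiv (x : ℝ) (hx : x ^ 2 < c ^ 2) :
      HasDerivAt (fun x => x ^ (n + 1) * √(c ^ 2 - x ^ 2) ^ 3)
        ((n + 1) * c ^ 2 * (x ^ n * √(c ^ 2 - x ^ 2))
          - (n + 4) * (x ^ (n + 2) * √(c ^ 2 - x ^ 2))) x := by
    refine ((hasDerivAt_pow (n + 1) x).mul (hasDerivAt_sqrt_sq_sub_sq_pow_three hx)).congr_deriv ?_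
    have hsq := sq_sqrt (sub_pos.mpr hx).le
    push_cast
    linear_combination ((n + 1) * x ^ n * √(c ^ 2 - x ^ 2)) * hsq
  have h := integral_eq_zero_of_hasDerivAt_of_vanish_endpoints hc (by fun_prop) (by simp)
    (by simp) hderiv (by fun_prop)
  rw [intervalIntegral.integral_sub, intervalIntegral.integral_const_mul,
    intervalIntegral.integral_const_mul] at h
  · linarith
  all_goals exact (by fun_prop : Continuous _).intervalIntegrable _ _

theorem rhoSC_eq (w x : ℝ) : rhoSC w x = (2 * π * w ^ 2)⁻¹ * √((2 * w) ^ 2 - x ^ 2) := by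
  rw [rhoSC, show (2 * w) ^ 2 - x ^ 2 = 4 * w ^ 2 - x ^ 2 by ring]
  rcases le_total 0 (4 * w ^ 2 - x ^ 2) with h | h
  · rw [max_eq_right h]
  · rw [max_eq_left h, Real.sqrt_zero, sqrt_eq_zero_of_nonpos h]

theorem continuous_rhoSC (w : ℝ) : Continuous (rhoSC w) := by
  unfold rhoSC
  fun_prop

theorem integral_pow_mul_sqrt_eq_aeratedCatalan {w : ℝ} (hw : 0 < w) (n : ℕ) :
    ∫ x in -(2 * w)..2 * w, x ^ n * √((2 * w) ^ 2 - x ^ 2)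
      = 2 * π * w ^ (n + 2) * aeratedCatalan n := by
  have hc : 0 < 2 * w := by positivity
  induction n using Nat.twoStepInduction with
  | zero =>
    simp only [pow_zero, one_mul, zero_add, integral_sqrt_sq_sub_sq hc, aeratedCatalan_two_mul 0,
      catalan_zero, cast_one, mul_one]
    ring
  | one =>
    simp [integral_mul_sqrt_sq_sub_sq hc.le, aeratedCatalan]
  | more n ih _ =>
    have hrec := add_four_mul_integral_pow_mul_sqrt_sq_sub_sq hc.le n
    have hcat : ((n : ℝ) + 4) * aeratedCatalan (n + 2) = 4 * (n + 1) * aeratedCatalan n := by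
      exact_mod_cast add_four_mul_aeratedCatalan_add_two n
    rw [ih] at hrec
    refine mul_left_cancel₀ (by positivity : (n : ℝ) + 4 ≠ 0) ?_
    linear_combination hrec - 2 * π * w ^ (n + 4) * hcat

theorem integral_pow_mul_rhoSC {w : ℝ} (hw : 0 < w) (n : ℕ) :
    ∫ x in -(2 * w)..2 * w, (x : ℂ) ^ n * (rhoSC w x : ℂ) = (w : ℂ) ^ n * aeratedCatalan n := by
  have hreal : ∫ x in -(2 * w)..2 * w, x ^ n * rhoSC w x = w ^ n * aeratedCatalan n := by
    simp only [rhoSC_eq, mul_left_comm _ (2 * π * w ^ 2)⁻¹, intervalIntegral.integral_const_mul,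
      integral_pow_mul_sqrt_eq_aeratedCatalan hw]
    field_simp
    ring
  simp only [← Complex.ofReal_pow, ← Complex.ofReal_mul, intervalIntegral.integral_ofReal, hreal]
  push_cast
  ring

theorem summable_norm_mul_pow_div_factorial_aeratedCatalan (w t : ℝ) :
    Summable fun n => ‖(I * w) ^ n * aeratedCatalan n‖ * |t| ^ n / n ! := by
  refine (Real.summable_pow_div_factorial (2 * |w| * |t|)).of_nonneg_of_le (fun n => by positivity)
    fun n => ?_
  have hle : (aeratedCatalan n : ℝ) ≤ 2 ^ n := by exact_mod_cast aeratedCatalan_le_two_pow n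
  simp only [norm_mul, norm_pow, Complex.norm_I, Complex.norm_real, Complex.norm_natCast, one_pow,
    one_mul, Real.norm_eq_abs, mul_pow]
  rw [mul_comm (2 ^ n : ℝ)]
  gcongr

theorem hasSum_vSC {w : ℝ} (hw : 0 < w) (r : ℝ) :
    HasSum (fun n => (I * w) ^ n * aeratedCatalan n * (r : ℂ) ^ n / n !) (vSC w r) := by
  have h := hasSum_intervalIntegral_cexp_mul
    ((Complex.continuous_ofReal.comp (continuous_rhoSC w)).intervalIntegrable (-(2 * w)) (2 * w)) r
  simp only [Function.comp_apply, integral_pow_mul_rhoSC hw] at h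
  exact h.congr_fun fun n => by ring

theorem hasSum_intervalIntegral_vSC_mul_vSC {w : ℝ} (hw : 0 < w) (t : ℝ) :
    HasSum (fun N => (I * w) ^ N * aeratedCatalan (N + 2) * (t : ℂ) ^ (N + 1) / (N + 1)!)
      (∫ s in (0 : ℝ)..t, vSC w (t - s) * vSC w s) :=
  (hasSum_intervalIntegral_mul_of_hasSum_pow_div_factorial
    (summable_norm_mul_pow_div_factorial_aeratedCatalan w t)
    (summable_norm_mul_pow_div_factorial_aeratedCatalan w t) (hasSum_vSC hw)
    (hasSum_vSC hw)).congr_fun fun N => by rw [sum_antidiagonal_pow_mul_aeratedCatalan]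

theorem hasSum_intervalIntegral_cexp_mul_self_mul_rhoSC {w : ℝ} (hw : 0 < w) (t : ℝ) :
    HasSum (fun N => (I * w) ^ N * aeratedCatalan (N + 2) * (t : ℂ) ^ (N + 1) / (N + 1)!)
      (-(I / (w : ℂ) ^ 2) *
        ∫ x in -(2 * w)..2 * w, Complex.exp (I * t * x) * ((x : ℂ) * (rhoSC w x : ℂ))) := by
  have hmoment (n : ℕ) : ∫ x in -(2 * w)..2 * w, (x : ℂ) ^ n * ((x : ℂ) * (rhoSC w x : ℂ))
      = (w : ℂ) ^ (n + 1) * aeratedCatalan (n + 1) := by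
    simp only [← mul_assoc, ← pow_succ, integral_pow_mul_rhoSC hw]
  have h := (hasSum_intervalIntegral_cexp_mul (g := fun x : ℝ => (x : ℂ) * (rhoSC w x : ℂ))
    ((Complex.continuous_ofReal.mul (Complex.continuous_ofReal.comp (continuous_rhoSC w))
      ).intervalIntegrable (-(2 * w)) (2 * w)) t).mul_left (-(I / (w : ℂ) ^ 2))
  rw [← hasSum_nat_add_iff' 1] at h
  simp only [hmoment, sum_range_one, zero_add, aeratedCatalan_of_not_even (show ¬Even 1 by decide),
    CharP.cast_eq_zero, mul_zero, sub_zero] at h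
  refine h.congr_fun fun N => ?_
  have hw0 : (w : ℂ) ≠ 0 := by exact_mod_cast hw.ne'
  field_simp
  linear_combination ((w : ℂ) ^ (N + 2) * I ^ N * aeratedCatalan (N + 2) * (t : ℂ) ^ (N + 1)
    / (N + 1)!) * Complex.I_sq

/-- `(v∗v)(t) = −(i/w²) ∫_{−2w}^{2w} e^{iμt} μ ρ_sc(μ) dμ`, where
`(v∗v)(t) = ∫₀ᵗ v(t−s)v(s) ds`. -/
theorem semicircle_double_convolution (w : ℝ) (hw : 0 < w) (t : ℝ) :
    (∫ s in (0:ℝ)..t, vSC w (t - s) * vSC w s) =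
      -(Complex.I / (w : ℂ) ^ 2) *
        ∫ x in (-(2 * w))..(2 * w), Complex.exp (Complex.I * x * t) * ((x : ℂ) * (rhoSC w x : ℂ)) := by
  have hexp (x : ℝ) : Complex.exp (I * x * t) = Complex.exp (I * t * x) := by
    rw [mul_right_comm]
  simp only [hexp]
  exact (hasSum_intervalIntegral_vSC_mul_vSC hw t).unique
    (hasSum_intervalIntegral_cexp_mul_self_mul_rhoSC hw t)
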